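/- Let μ be a signed moment measure on ℝ^d which has a density w with respect to Lebesgue measure such that for each r > 0 the function θ ↦ w(rθ) belongs to L²(S^{d-1}). If all Laplace–Fourier coefficients w_{k,l}(r) := ∫_{S^{d-1}} w(rθ) Y_{k,l}(θ) dθ are non-negative, then μ is pseudo-positive, its component measures are given by dμ_{k,l}(r) = r^{k+d-1} w_{k,l}(r) dr, and ∫_0^∞ r^{-k} dμ_{k,l}(r) = ∫_0^∞ w_{k,l}(r) r^{d-1} dr whenever the latter integral exists. -/

import Mathlib

open MeasureTheory MvPolynomial Metric
open scoped ComplexOrder ENNReal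

noncomputable section

/-- `d`-dimensional Euclidean space. -/
abbrev E (d : ℕ) := EuclideanSpace ℝ (Fin d)

/-- The (surface) measure `dθ` on the unit sphere `S^{d-1}`. -/
noncomputable def sphMeas (d : ℕ) : Measure (sphere (0 : E d) 1) :=
  (volume : Measure (E d)).toSphere

/-- A bundled orthonormal basis `Y_{k,l}`, `l = 1,…,a_k`, of the spaces `H_k(ℝ^d)` of
real-valued harmonic polynomials homogeneous of degree `k`, orthonormal with respect to
`⟨f,g⟩ = ∫_{S^{d-1}} f g dθ`. -/
structure HarmonicBasis (d : ℕ) where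
  a : ℕ → ℕ
  Y : (k : ℕ) → Fin (a k) → MvPolynomial (Fin d) ℝ
  harmonic : ∀ k l, (∑ i, pderiv i (pderiv i (Y k l))) = 0
  homogeneous : ∀ k l, (Y k l).IsHomogeneous k
  orthonormal : ∀ (k k' : ℕ) (l : Fin (a k)) (l' : Fin (a k')),
    (∫ θ : sphere (0 : E d) 1,
        (eval (fun i => (θ : E d) i) (Y k l)) * (eval (fun i => (θ : E d) i) (Y k' l'))
      ∂(sphMeas d)) = if k = k' ∧ (l : ℕ) = (l' : ℕ) then 1 else 0
  complete : ∀ (k : ℕ) (P : MvPolynomial (Fin d) ℝ),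
    (∑ i, pderiv i (pderiv i P)) = 0 → P.IsHomogeneous k →
      P ∈ Submodule.span ℝ (Set.range (Y k))

/-- Evaluation of a complex polynomial in `d` variables at a point of `ℝ^d`. -/
def evalC {d : ℕ} (P : MvPolynomial (Fin d) ℂ) (x : E d) : ℂ :=
  eval (fun i => (x i : ℂ)) P

/-- The polynomial `|x|² = x₁² + … + x_d²`. -/
def normSqP (d : ℕ) : MvPolynomial (Fin d) ℂ := ∑ i, X i ^ 2

/-- Integral of a (complex- or real-valued) function with respect to a signed measure,
via the Jordan decomposition. -/
noncomputable def sInt {α : Type*} {G : Type*} [MeasurableSpace α] [NormedAddCommGroup G]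
    [NormedSpace ℝ G] (μ : SignedMeasure α) (f : α → G) : G :=
  (∫ x, f x ∂μ.toJordanDecomposition.posPart) - ∫ x, f x ∂μ.toJordanDecomposition.negPart

/-- A signed measure is a moment measure if every polynomial is integrable with respect to
its total variation. -/
def IsMomentMeasure {d : ℕ} (μ : SignedMeasure (E d)) : Prop :=
  ∀ P : MvPolynomial (Fin d) ℂ, Integrable (evalC P) μ.totalVariation

namespace HarmonicBasis

variable {d : ℕ} (B : HarmonicBasis d)

/-- `Y_{k,l}` as a function on `ℝ^d`. -/
def Yf (k : ℕ) (l : Fin (B.a k)) (x : E d) : ℝ := eval (fun i => x i) (B.Y k l)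

/-- `Y_{k,l}` as a complex polynomial. -/
def YC (k : ℕ) (l : Fin (B.a k)) : MvPolynomial (Fin d) ℂ :=
  (B.Y k l).map (algebraMap ℝ ℂ)

/-- The Laplace–Fourier coefficient `f_{k,l}(r) = ∫_{S^{d-1}} f(rθ) Y_{k,l}(θ) dθ`. -/
noncomputable def lfCoeff (f : E d → ℂ) (k : ℕ) (l : Fin (B.a k)) (r : ℝ) : ℂ :=
  ∫ θ : sphere (0 : E d) 1, f (r • (θ : E d)) * (B.Yf k l (θ : E d) : ℂ) ∂(sphMeas d)

/-- `GaussDecomp B f K p` : `p` is a Gauss (Laplace–Fourier) decomposition of the polynomial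
`f`, i.e. `f(x) = ∑_{k=0}^{K} ∑_{l=1}^{a_k} p_{k,l}(|x|²) Y_{k,l}(x)` with `p_{k,l} = 0` for
`k > K`. -/
def GaussDecomp (f : MvPolynomial (Fin d) ℂ) (K : ℕ)
    (p : (k : ℕ) → Fin (B.a k) → Polynomial ℂ) : Prop :=
  (∀ k, K < k → ∀ l, p k l = 0) ∧
    f = ∑ k ∈ Finset.range (K + 1), ∑ l,
      Polynomial.aeval (normSqP d) (p k l) * B.YC k l

/-- The component functional `T_{k,l}(p) = T(p(|x|²) Y_{k,l}(x))`. -/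
def component (T : MvPolynomial (Fin d) ℂ → ℂ) (k : ℕ) (l : Fin (B.a k))
    (p : Polynomial ℂ) : ℂ :=
  T (Polynomial.aeval (normSqP d) p * B.YC k l)

/-- A functional `T` on `ℂ[x₁,…,x_d]` is pseudo-positive definite (w.r.t. the basis `Y_{k,l}`)
if `T_{k,l}(p* p) ≥ 0` and `T_{k,l}(t · p*(t) p(t)) ≥ 0` for all univariate `p` and all `k, l`. -/
def PPD (T : MvPolynomial (Fin d) ℂ → ℂ) : Prop :=
  ∀ (k : ℕ) (l : Fin (B.a k)) (p : Polynomial ℂ),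
    0 ≤ B.component T k l (p.map (starRingEnd ℂ) * p) ∧
    0 ≤ B.component T k l (Polynomial.X * (p.map (starRingEnd ℂ) * p))

/-- A signed measure `μ` on `ℝ^d` is pseudo-positive (w.r.t. the basis `Y_{k,l}`) if
`∫ h(|x|) Y_{k,l}(x) dμ ≥ 0` for every non-negative continuous compactly supported `h`. -/
def PseudoPositive (μ : SignedMeasure (E d)) : Prop :=
  ∀ (k : ℕ) (l : Fin (B.a k)) (h : ℝ → ℝ), Continuous h → HasCompactSupport h →
    (∀ t, 0 ≤ h t) → 0 ≤ sInt μ (fun x => h ‖x‖ * B.Yf k l x)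

/-- `ν` is the family of component measures `μ_{k,l}` of the signed measure `μ`, i.e.
`∫_0^∞ h dμ_{k,l} = ∫_{ℝ^d} h(|x|) Y_{k,l}(x) dμ` for all continuous compactly supported `h`. -/
def IsComponentFamily (μ : SignedMeasure (E d))
    (ν : (k : ℕ) → Fin (B.a k) → Measure ℝ) : Prop :=
  ∀ k l, (ν k l) (Set.Iio 0) = 0 ∧
    ∀ h : ℝ → ℝ, Continuous h → HasCompactSupport h →
      ∫ t, h t ∂(ν k l) = sInt μ (fun x => h ‖x‖ * B.Yf k l x)

/-- The summability condition `C_N = ∑_{k,l} ∫_0^∞ r^N r^{-k} dσ_{k,l}(r) < ∞` for all `N`. -/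
def SummCond (σ : (k : ℕ) → Fin (B.a k) → Measure ℝ) : Prop :=
  ∀ N : ℕ, (∑' k : ℕ, ∑ l, ∫⁻ r, (ENNReal.ofReal r) ^ N * ((ENNReal.ofReal r) ^ k)⁻¹
    ∂(σ k l)) < ⊤

end HarmonicBasis

/-- The set `W_τ^{Sti}` of all non-negative moment measures on `[0,∞)` having the same
moments as `τ`. -/
def WSti (τ : Measure ℝ) : Set (Measure ℝ) :=
  {ρ | ρ (Set.Iio 0) = 0 ∧ (∀ m : ℕ, Integrable (fun t => t ^ m) ρ) ∧
    ∀ m : ℕ, ∫ t, t ^ m ∂ρ = ∫ t, t ^ m ∂τ}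

/-- A measure `ν` on `[0,∞)` is determined in the sense of Stieltjes if it is the only
non-negative measure on `[0,∞)` with its moments. -/
def StieltjesDeterminate (ν : Measure ℝ) : Prop :=
  ∀ τ : Measure ℝ, τ ∈ WSti ν → τ = ν

/-! Since `μ` has density `w`, the integral of `h(|x|) Y_{k,l}(x)` against `μ` is a Lebesgue
integral, which polar coordinates `x = rθ` turn into `∫_0^∞ r^{d-1} ∫_{S^{d-1}} h(r) Y_{k,l}(rθ)
w(rθ) dθ dr`. Homogeneity gives `Y_{k,l}(rθ) = r^k Y_{k,l}(θ)`, so the inner integral is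
`h(r) r^k w_{k,l}(r)`. Hence `∫ h(|x|) Y_{k,l} dμ = ∫_0^∞ h(r) r^{k+d-1} w_{k,l}(r) dr`, which
is non-negative and identifies `μ_{k,l}`; dividing the density by `r^k` gives the last claim. -/

open Set

theorem MvPolynomial.IsHomogeneous.eval_smul {σ R : Type*} [CommSemiring R]
    {φ : MvPolynomial σ R} {n : ℕ} (hφ : φ.IsHomogeneous n) (r : R) (x : σ → R) :
    eval (r • x) φ = r ^ n * eval x φ := by
  rw [eval_eq, eval_eq, Finset.mul_sum]
  refine Finset.sum_congr rfl fun m hm => ?_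
  have hdeg : ∑ i ∈ m.support, m i = n := by
    by_contra hne
    exact mem_support_iff.mp hm (hφ.coeff_eq_zero hne)
  simp only [Pi.smul_apply, smul_eq_mul, mul_pow, Finset.prod_mul_distrib,
    Finset.prod_pow_eq_pow_sum, hdeg]
  ring

theorem HasCompactSupport.comp_norm {F β : Type*} [SeminormedAddCommGroup F] [ProperSpace F]
    [Zero β] {h : ℝ → β} (hh : HasCompactSupport h) : HasCompactSupport fun x : F => h ‖x‖ := by
  obtain ⟨R, hR⟩ := hh.isBounded.subset_closedBall 0
  refine .intro (isCompact_closedBall 0 R) fun x hx =>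
    image_eq_zero_of_notMem_tsupport fun hmem => hx ?_
  simpa using hR hmem

section WithDensity

variable {α G : Type*} [MeasurableSpace α] [NormedAddCommGroup G] [NormedSpace ℝ G]
  {ν : Measure α}

theorem integral_withDensity_ofReal {ρ : α → ℝ} (hρ : Measurable ρ) (g : α → G) :
    ∫ x, g x ∂ν.withDensity (fun x => ENNReal.ofReal (ρ x)) = ∫ x, max (ρ x) 0 • g x ∂ν := by
  rw [integral_withDensity_eq_integral_toReal_smul hρ.ennreal_ofReal
    (ae_of_all _ fun _ => ENNReal.ofReal_lt_top)]
  rfl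

theorem integral_restrict_withDensity_ofReal {s : Set α} (hs : MeasurableSet s) {ρ : α → ℝ}
    (hρ : Measurable ρ) (hρs : ∀ x ∈ s, 0 ≤ ρ x) (g : α → G) :
    ∫ x, g x ∂(ν.restrict s).withDensity (fun x => ENNReal.ofReal (ρ x)) =
      ∫ x in s, ρ x • g x ∂ν := by
  rw [integral_withDensity_ofReal hρ]
  exact setIntegral_congr_fun hs fun x hx => by rw [max_eq_left (hρs x hx)]

theorem sInt_withDensityᵥ {w : α → ℝ} (hwm : Measurable w) (hwi : Integrable w ν) {f : α → G}
    (hfw : Integrable (fun x => w x • f x) ν) :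
    sInt (ν.withDensityᵥ w) f = ∫ x, w x • f x ∂ν := by
  -- the Jordan parts of `ν.withDensityᵥ w` have densities `w⁺` and `w⁻`
  have hJ := SignedMeasure.toJordanDecomposition_eq_of_eq_add_withDensity hwm hwi
    VectorMeasure.MutuallySingular.zero_left (zero_add _).symm
  have hpos : Integrable (fun x => max (w x) 0 • f x) ν := by
    refine (hfw.indicator (s := {x | 0 ≤ w x}) (measurableSet_le measurable_const hwm)).congr
      (ae_of_all _ fun x => ?_)
    by_cases h : 0 ≤ w x
    · simp [h]
    · simp [h, max_eq_right (le_of_not_ge h)]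
  have hneg : Integrable (fun x => max (-w x) 0 • f x) ν := by
    refine (hfw.neg.indicator (s := {x | w x ≤ 0}) (measurableSet_le hwm measurable_const)).congr
      (ae_of_all _ fun x => ?_)
    by_cases h : w x ≤ 0
    · simp [h]
    · simp [h, max_eq_right (le_of_lt (neg_neg_of_pos (lt_of_not_ge h)))]
  rw [sInt, hJ]
  simp only [SignedMeasure.toJordanDecomposition_zero, JordanDecomposition.zero_posPart,
    JordanDecomposition.zero_negPart, zero_add]
  rw [integral_withDensity_ofReal hwm, integral_withDensity_ofReal (ρ := fun x => -w x) hwm.neg,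
    ← integral_sub hpos hneg]
  simp only [← sub_smul, max_zero_sub_max_neg_zero_eq_self]

end WithDensity

section Polar

variable {F V : Type*} [NormedAddCommGroup F] [NormedSpace ℝ F] [NormedAddCommGroup V]
  [NormedSpace ℝ V] [FiniteDimensional ℝ V] [MeasurableSpace V] [BorelSpace V] [Nontrivial V]
  (μ : Measure V) [μ.IsAddHaarMeasure]

theorem integral_eq_integral_Ioi_integral_sphere {f : V → F} (hf : Integrable f μ) :
    ∫ x, f x ∂μ = ∫ r in Ioi (0 : ℝ), r ^ (Module.finrank ℝ V - 1) •
      ∫ θ : sphere (0 : V) 1, f (r • (θ : V)) ∂μ.toSphere := by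
  set n := Module.finrank ℝ V - 1
  set g : sphere (0 : V) 1 × Ioi (0 : ℝ) → F := fun p => f ((p.2 : ℝ) • (p.1 : V))
  have hmp := μ.measurePreserving_homeomorphUnitSphereProd
  have hemb := (homeomorphUnitSphereProd V).measurableEmbedding
  have hg : ∀ x : ({0}ᶜ : Set V), g (homeomorphUnitSphereProd V x) = f x := fun x => by
    have hx : ‖(x : V)‖ ≠ 0 := norm_ne_zero_iff.mpr x.2
    simp [g, smul_smul, mul_inv_cancel₀ hx]
  have hgi : Integrable g (μ.toSphere.prod (Measure.volumeIoiPow n)) := by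
    rw [← hmp.integrable_comp_emb hemb]
    have : IntegrableOn f {0}ᶜ μ := hf.integrableOn
    rw [integrableOn_iff_comap_subtypeVal (measurableSet_singleton _).compl] at this
    simpa [Function.comp_def, hg] using this
  calc ∫ x, f x ∂μ = ∫ x : ({0}ᶜ : Set V), f x ∂μ.comap Subtype.val := by
        rw [integral_subtype_comap (measurableSet_singleton _).compl, restrict_compl_singleton]
    _ = ∫ p, g p ∂(μ.toSphere.prod (Measure.volumeIoiPow n)) := by
        rw [← hmp.integral_comp hemb g]
        simp only [hg]
    _ = ∫ r : Ioi (0 : ℝ), ∫ θ, g (θ, r) ∂μ.toSphere ∂(Measure.volumeIoiPow n) :=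
        integral_prod_symm g hgi
    _ = _ := by
        simp only [Measure.volumeIoiPow, ENNReal.ofReal, g]
        rw [integral_withDensity_eq_integral_smul
            (measurable_subtype_coe.pow_const _).real_toNNReal,
          integral_subtype_comap measurableSet_Ioi fun r : ℝ =>
            (r ^ n).toNNReal • ∫ θ : sphere (0 : V) 1, f (r • (θ : V)) ∂μ.toSphere]
        refine setIntegral_congr_fun measurableSet_Ioi fun r hr => ?_
        rw [NNReal.smul_def, Real.coe_toNNReal _ (pow_nonneg (le_of_lt hr) _)]

end Polar

instance (d : ℕ) : IsFiniteMeasure (sphMeas d) := by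
  unfold sphMeas
  infer_instance

namespace HarmonicBasis

variable {d : ℕ} (B : HarmonicBasis d)

theorem continuous_Yf (k : ℕ) (l : Fin (B.a k)) : Continuous (B.Yf k l) :=
  (continuous_eval (B.Y k l)).comp (PiLp.continuous_ofLp 2 _)

theorem Yf_smul (k : ℕ) (l : Fin (B.a k)) (r : ℝ) (x : E d) :
    B.Yf k l (r • x) = r ^ k * B.Yf k l x :=
  (B.homogeneous k l).eval_smul r _

theorem measurable_integral_sphere_mul_Yf {w : E d → ℝ} (hwm : Measurable w) (k : ℕ)
    (l : Fin (B.a k)) :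
    Measurable fun r : ℝ => ∫ θ : sphere (0 : E d) 1, w (r • (θ : E d)) * B.Yf k l θ ∂sphMeas d :=
  have : Measurable fun q : ℝ × sphere (0 : E d) 1 => w (q.1 • (q.2 : E d)) * B.Yf k l q.2 :=
    (hwm.comp (by fun_prop)).mul ((B.continuous_Yf k l).comp (by fun_prop)).measurable
  this.stronglyMeasurable.integral_prod_right'.measurable

theorem sInt_withDensityᵥ_norm_mul_Yf (hd : 1 ≤ d) {w : E d → ℝ} (hwm : Measurable w)
    (hwi : Integrable w) {h : ℝ → ℝ} (hc : Continuous h) (hcs : HasCompactSupport h)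
    (k : ℕ) (l : Fin (B.a k)) :
    sInt ((volume : Measure (E d)).withDensityᵥ w) (fun x => h ‖x‖ * B.Yf k l x) =
      ∫ r in Ioi (0 : ℝ), h r * (r ^ (k + d - 1) *
        ∫ θ : sphere (0 : E d) 1, w (r • (θ : E d)) * B.Yf k l θ ∂sphMeas d) := by
  have : Nontrivial (E d) :=
    Module.nontrivial_of_finrank_pos (R := ℝ) (by rw [finrank_euclideanSpace_fin]; omega)
  have hf : Continuous fun x : E d => h ‖x‖ * B.Yf k l x := by
    have := B.continuous_Yf k l
    fun_prop
  obtain ⟨C, hC⟩ := (hcs.comp_norm.mul_right).exists_bound_of_continuous hf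
  have hfw : Integrable (fun x => w x • (h ‖x‖ * B.Yf k l x)) :=
    hwi.mul_bdd hf.aestronglyMeasurable (ae_of_all _ hC)
  rw [sInt_withDensityᵥ hwm hwi hfw,
    integral_eq_integral_Ioi_integral_sphere _ hfw, finrank_euclideanSpace_fin]
  refine setIntegral_congr_fun measurableSet_Ioi fun r (hr : 0 < r) => ?_
  have hnorm : ∀ θ : sphere (0 : E d) 1, ‖r • (θ : E d)‖ = r := fun θ => by
    simp [norm_smul, abs_of_pos hr]
  simp only [smul_eq_mul, hnorm, Yf_smul]
  rw [← integral_const_mul, ← integral_const_mul, sphMeas, ← integral_const_mul]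
  refine integral_congr_ae (ae_of_all _ fun θ => ?_)
  rw [show k + d - 1 = (d - 1) + k by omega, pow_add]
  ring

end HarmonicBasis

theorem statement18_general {d : ℕ} (hd : 1 ≤ d) (B : HarmonicBasis d)
    (μ : SignedMeasure (E d))
    (w : E d → ℝ) (hwm : Measurable w) (hwi : Integrable w (volume : Measure (E d)))
    (hdens : ∀ s : Set (E d), MeasurableSet s → μ s = ∫ x in s, w x ∂(volume : Measure (E d)))
    (wkl : (k : ℕ) → Fin (B.a k) → ℝ → ℝ)
    (hwkl : ∀ k l (r : ℝ), wkl k l r =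
      ∫ θ : sphere (0 : E d) 1, w (r • (θ : E d)) * B.Yf k l (θ : E d) ∂(sphMeas d))
    (hnonneg : ∀ k l (r : ℝ), 0 < r → 0 ≤ wkl k l r) :
    B.PseudoPositive μ ∧
    B.IsComponentFamily μ (fun k l =>
      ((volume : Measure ℝ).restrict (Set.Ioi 0)).withDensity
        (fun r => ENNReal.ofReal (r ^ (k + d - 1) * wkl k l r))) ∧
    ∀ k l, Integrable (fun r => wkl k l r * r ^ (d - 1))
        ((volume : Measure ℝ).restrict (Set.Ioi 0)) →
      (∫ r, (r ^ k)⁻¹ ∂(((volume : Measure ℝ).restrict (Set.Ioi 0)).withDensity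
          (fun r => ENNReal.ofReal (r ^ (k + d - 1) * wkl k l r))))
        = ∫ r in Set.Ioi (0 : ℝ), wkl k l r * r ^ (d - 1) := by
  have hμ : μ = (volume : Measure (E d)).withDensityᵥ w := by
    ext s hs
    rw [hdens s hs, withDensityᵥ_apply hwi hs]
  have hpolar : ∀ k l h, Continuous h → HasCompactSupport h →
      sInt μ (fun x => h ‖x‖ * B.Yf k l x) =
        ∫ r in Ioi (0 : ℝ), h r * (r ^ (k + d - 1) * wkl k l r) := fun k l h hc hcs => by
    simp only [hμ, hwkl, B.sInt_withDensityᵥ_norm_mul_Yf hd hwm hwi hc hcs]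
  have hρ : ∀ k l, Measurable fun r : ℝ => r ^ (k + d - 1) * wkl k l r := fun k l => by
    simp only [hwkl]
    exact (measurable_id.pow_const _).mul (B.measurable_integral_sphere_mul_Yf hwm k l)
  have hρ_nonneg : ∀ k l, ∀ r ∈ Ioi (0 : ℝ), 0 ≤ r ^ (k + d - 1) * wkl k l r :=
    fun k l r (hr : 0 < r) => mul_nonneg (pow_nonneg hr.le _) (hnonneg k l r hr)
  refine ⟨fun k l h hc hcs hh => ?_, fun k l => ⟨?_, fun h hc hcs => ?_⟩, fun k l _ => ?_⟩
  · rw [hpolar k l h hc hcs]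
    exact setIntegral_nonneg measurableSet_Ioi fun r hr => mul_nonneg (hh r) (hρ_nonneg k l r hr)
  · rw [withDensity_apply _ measurableSet_Iio, Measure.restrict_restrict measurableSet_Iio,
      Iio_inter_Ioi, Ioo_self, Measure.restrict_empty, lintegral_zero_measure]
  · rw [hpolar k l h hc hcs,
      integral_restrict_withDensity_ofReal measurableSet_Ioi (hρ k l) (hρ_nonneg k l)]
    simp only [smul_eq_mul, mul_comm]
  · rw [integral_restrict_withDensity_ofReal measurableSet_Ioi (hρ k l) (hρ_nonneg k l)]
    refine setIntegral_congr_fun measurableSet_Ioi fun r (hr : 0 < r) => ?_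
    rw [show k + d - 1 = k + (d - 1) by omega, pow_add, smul_eq_mul]
    field_simp

theorem statement18 {d : ℕ} (hd : 1 ≤ d) (B : HarmonicBasis d)
    (μ : SignedMeasure (E d)) (hmom : IsMomentMeasure μ)
    (w : E d → ℝ) (hwm : Measurable w) (hwi : Integrable w (volume : Measure (E d)))
    (hdens : ∀ s : Set (E d), MeasurableSet s → μ s = ∫ x in s, w x ∂(volume : Measure (E d)))
    (hL2 : ∀ r : ℝ, 0 < r →
      MemLp (fun θ : sphere (0 : E d) 1 => w (r • (θ : E d))) 2 (sphMeas d))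
    (wkl : (k : ℕ) → Fin (B.a k) → ℝ → ℝ)
    (hwkl : ∀ k l (r : ℝ), wkl k l r =
      ∫ θ : sphere (0 : E d) 1, w (r • (θ : E d)) * B.Yf k l (θ : E d) ∂(sphMeas d))
    (hnonneg : ∀ k l (r : ℝ), 0 < r → 0 ≤ wkl k l r) :
    B.PseudoPositive μ ∧
    B.IsComponentFamily μ (fun k l =>
      ((volume : Measure ℝ).restrict (Set.Ioi 0)).withDensity
        (fun r => ENNReal.ofReal (r ^ (k + d - 1) * wkl k l r))) ∧
    ∀ k l, Integrable (fun r => wkl k l r * r ^ (d - 1))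
        ((volume : Measure ℝ).restrict (Set.Ioi 0)) →
      (∫ r, (r ^ k)⁻¹ ∂(((volume : Measure ℝ).restrict (Set.Ioi 0)).withDensity
          (fun r => ENNReal.ofReal (r ^ (k + d - 1) * wkl k l r))))
        = ∫ r in Set.Ioi (0 : ℝ), wkl k l r * r ^ (d - 1) :=
  statement18_general hd B μ w hwm hwi hdens wkl hwkl hnonneg
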